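/- Let ζ ≥ 0 and let μ and ν be finite ζ-comparable measures on a measurable space X. Then for all measurable sets A, B, C ⊆ X one has α_μ(A,C) ≤ 2·α_μ(A,B) + 2·exp(2ζ)·α_ν(B,C). -/

import Mathlib

open MeasureTheory Real

open Classical in
/-- The discrepancy `α_μ(A,B) = μ(A △ B)/μ(A ∪ B)` when `0 < μ (A ∪ B) < ∞`, and `0`
otherwise. -/
noncomputable def disc {X : Type*} [MeasurableSpace X] (μ : Measure X) (A B : Set X) : ℝ :=
  if 0 < μ (A ∪ B) ∧ μ (A ∪ B) < ⊤ then (μ (symmDiff A B)).toReal / (μ (A ∪ B)).toReal else 0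

/-- Two measures are `ζ`-comparable if each is bounded by `exp ζ` times the other on all
measurable sets. -/
def Comparable {X : Type*} [MeasurableSpace X] (ζ : ℝ) (μ ν : Measure X) : Prop :=
  ∀ S : Set X, MeasurableSet S →
    μ S ≤ ENNReal.ofReal (Real.exp ζ) * ν S ∧ ν S ≤ ENNReal.ofReal (Real.exp ζ) * μ S

/-! If `α_μ(A,B) ≤ 1/2`, then `μ(A △ B) = α μ(A ∪ B) ≤ α (μ(A ∪ C) + μ(A △ B))` gives
`μ(A △ B) ≤ 2α μ(A ∪ C)`, and in particular `μ(A ∪ B ∪ C) ≤ 2 μ(A ∪ C)`. Comparability moves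
`μ(B △ C)` to `ν(B △ C) = α_ν(B,C) ν(B ∪ C)` and back at the cost of `e^{2ζ}`, so the triangle
inequality for `△` yields the estimate. If either discrepancy on the right exceeds `1/2`, the
right-hand side is at least `1`, which bounds every discrepancy. -/

open scoped symmDiff

lemma union_union_subset_union_union_symmDiff {X : Type*} (A B C : Set X) :
    A ∪ B ∪ C ⊆ A ∪ C ∪ A ∆ B := by
  intro x
  simp only [Set.mem_union, Set.mem_symmDiff]
  tauto

section Disc

variable {X : Type*} [MeasurableSpace X] (μ : Measure X)

lemma disc_nonneg (A B : Set X) : 0 ≤ disc μ A B := by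
  unfold disc
  split_ifs <;> positivity

lemma disc_le_one (A B : Set X) : disc μ A B ≤ 1 := by
  unfold disc
  split_ifs with h
  · exact div_le_one_of_le₀ (ENNReal.toReal_mono h.2.ne (measure_mono symmDiff_le_sup))
      ENNReal.toReal_nonneg
  · exact zero_le_one

lemma measureReal_symmDiff_eq_disc_mul [IsFiniteMeasure μ] (A B : Set X) :
    μ.real (A ∆ B) = disc μ A B * μ.real (A ∪ B) := by
  unfold disc
  split_ifs with h
  · simp only [measureReal_def]
    rw [div_mul_cancel₀ _ (ENNReal.toReal_pos h.1.ne' h.2.ne).ne']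
  · have hAB : μ (A ∪ B) = 0 := by simpa using h
    rw [zero_mul, measureReal_def, measure_mono_null symmDiff_le_sup hAB, ENNReal.toReal_zero]

lemma disc_le_of_measureReal_symmDiff_le {A B : Set X} {K : ℝ} (hK : 0 ≤ K)
    (h : μ.real (A ∆ B) ≤ K * μ.real (A ∪ B)) : disc μ A B ≤ K := by
  unfold disc
  split_ifs with hAB
  · exact (div_le_iff₀ (ENNReal.toReal_pos hAB.1.ne' hAB.2.ne)).2 h
  · exact hK

variable [IsFiniteMeasure μ]

lemma measureReal_symmDiff_le_two_mul_disc {A B : Set X} (hAB : disc μ A B ≤ 1 / 2)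
    (C : Set X) :
    μ.real (A ∆ B) ≤ 2 * disc μ A B * μ.real (A ∪ C) := by
  have hcover : μ.real (A ∪ B) ≤ μ.real (A ∪ C) + μ.real (A ∆ B) :=
    (measureReal_mono (Set.subset_union_left.trans
      (union_union_subset_union_union_symmDiff A B C))).trans (measureReal_union_le _ _)
  have key := measureReal_symmDiff_eq_disc_mul μ A B
  nlinarith [disc_nonneg μ A B, measureReal_nonneg (μ := μ) (s := A ∆ B)]

lemma measureReal_union_union_le_two_mul {A B : Set X} (hAB : disc μ A B ≤ 1 / 2)
    (C : Set X) :
    μ.real (A ∪ B ∪ C) ≤ 2 * μ.real (A ∪ C) := by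
  have hcover := (measureReal_mono (union_union_subset_union_union_symmDiff A B C)).trans
    (measureReal_union_le (μ := μ) _ _)
  have hsymm := measureReal_symmDiff_le_two_mul_disc μ hAB C
  nlinarith [measureReal_nonneg (μ := μ) (s := A ∪ C)]

end Disc

namespace Comparable

variable {X : Type*} [MeasurableSpace X] {ζ : ℝ} {μ ν : Measure X}

lemma symm (h : Comparable ζ μ ν) : Comparable ζ ν μ :=
  fun S hS ↦ (h S hS).symm

lemma measureReal_le [IsFiniteMeasure ν] (h : Comparable ζ μ ν) {S : Set X}
    (hS : MeasurableSet S) : μ.real S ≤ exp ζ * ν.real S := by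
  have := ENNReal.toReal_mono (by finiteness) (h S hS).1
  rwa [ENNReal.toReal_mul, ENNReal.toReal_ofReal (exp_pos ζ).le] at this

lemma measureReal_symmDiff_le [IsFiniteMeasure μ] [IsFiniteMeasure ν] (h : Comparable ζ μ ν)
    {B C : Set X} (hB : MeasurableSet B) (hC : MeasurableSet C) :
    μ.real (B ∆ C) ≤ exp (2 * ζ) * disc ν B C * μ.real (B ∪ C) := calc
  μ.real (B ∆ C) ≤ exp ζ * ν.real (B ∆ C) := h.measureReal_le (hB.symmDiff hC)
  _ = exp ζ * disc ν B C * ν.real (B ∪ C) := by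
    rw [measureReal_symmDiff_eq_disc_mul, mul_assoc]
  _ ≤ exp ζ * disc ν B C * (exp ζ * μ.real (B ∪ C)) := by
    gcongr
    · exact mul_nonneg (exp_pos ζ).le (disc_nonneg ν B C)
    · exact h.symm.measureReal_le (hB.union hC)
  _ = exp (2 * ζ) * disc ν B C * μ.real (B ∪ C) := by
    rw [two_mul, exp_add]; ring

end Comparable

theorem disc_triangle_estimate_general {X : Type*} [MeasurableSpace X]
    (ζ : ℝ) (hζ : 0 ≤ ζ)
    (μ ν : Measure X) [IsFiniteMeasure μ] [IsFiniteMeasure ν]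
    (hcomp : Comparable ζ μ ν)
    (A B C : Set X) (hB : MeasurableSet B) (hC : MeasurableSet C) :
    disc μ A C ≤ 2 * disc μ A B + 2 * Real.exp (2 * ζ) * disc ν B C := by
  have hexp : 1 ≤ exp (2 * ζ) := one_le_exp (by linarith)
  have hAB₀ := disc_nonneg μ A B
  have hBC₀ := disc_nonneg ν B C
  by_cases hsmall : disc μ A B ≤ 1 / 2 ∧ disc ν B C ≤ 1 / 2
  swap
  · have := disc_le_one μ A C
    rw [not_and_or, not_le, not_le] at hsmall
    rcases hsmall with h | h <;> nlinarith
  obtain ⟨hAB, -⟩ := hsmall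
  refine disc_le_of_measureReal_symmDiff_le μ (by positivity) ?_
  have hBC : μ.real (B ∪ C) ≤ 2 * μ.real (A ∪ C) :=
    (measureReal_mono (Set.union_subset_union_left C Set.subset_union_right)).trans
      (measureReal_union_union_le_two_mul μ hAB C)
  calc μ.real (A ∆ C) ≤ μ.real (A ∆ B) + μ.real (B ∆ C) := measureReal_symmDiff_le C
    _ ≤ 2 * disc μ A B * μ.real (A ∪ C) + exp (2 * ζ) * disc ν B C * μ.real (B ∪ C) :=
      add_le_add (measureReal_symmDiff_le_two_mul_disc μ hAB C)
        (hcomp.measureReal_symmDiff_le hB hC)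
    _ ≤ 2 * disc μ A B * μ.real (A ∪ C) + exp (2 * ζ) * disc ν B C * (2 * μ.real (A ∪ C)) := by
      gcongr
    _ = (2 * disc μ A B + 2 * exp (2 * ζ) * disc ν B C) * μ.real (A ∪ C) := by ring

theorem disc_triangle_estimate {X : Type*} [MeasurableSpace X]
    (ζ : ℝ) (hζ : 0 ≤ ζ)
    (μ ν : Measure X) [IsFiniteMeasure μ] [IsFiniteMeasure ν]
    (hcomp : Comparable ζ μ ν)
    (A B C : Set X) (hA : MeasurableSet A) (hB : MeasurableSet B) (hC : MeasurableSet C) :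
    disc μ A C ≤ 2 * disc μ A B + 2 * Real.exp (2 * ζ) * disc ν B C :=
  disc_triangle_estimate_general ζ hζ μ ν hcomp A B C hB hC
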